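/- arXiv:math/0303338 — 2 statements merged into one kernel-verified Lean document; each statement's English description precedes it below -/
import Mathlib

section
/- Let H₁, H₂ be nonzero complex Hilbert spaces and let T ∈ B(H₂, H₁) with ‖T‖ ≤ 1. The Hilbert T₂-module H₁ ⊕ H₂ given by π_{(H₁,H₂,T)} is sub-tracing if and only if the range T(H₂) is not dense in H₁. -/
set_option synthInstance.maxHeartbeats 1000000
set_option maxHeartbeats 2000000

noncomputable section

open Filter

open scoped ENNReal Matrix.Norms.L2Operator

variable (A : Type) [NonUnitalNormedRing A] [NormedSpace ℂ A]

/-- A Hilbert `A`-module structure on the Hilbert space `K`: a contractive algebra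
homomorphism `π : A → B(K)` which is nondegenerate, i.e. the linear span of
`{π a x : a ∈ A, x ∈ K}` is dense in `K`. -/
def IsHilbertRep {K : Type} [NormedAddCommGroup K] [InnerProductSpace ℂ K] [CompleteSpace K]
    (π : A →ₙₐ[ℂ] (K →L[ℂ] K)) : Prop :=
  (∀ a : A, ‖π a‖ ≤ ‖a‖) ∧
  Dense ((Submodule.span ℂ {x : K | ∃ (a : A) (y : K), π a y = x} : Submodule ℂ K) : Set K)

/-- A bounded `A`-module map between Hilbert `A`-modules. -/
def IsModuleMap {K L : Type} [NormedAddCommGroup K] [InnerProductSpace ℂ K]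
    [NormedAddCommGroup L] [InnerProductSpace ℂ L]
    (πK : A →ₙₐ[ℂ] (K →L[ℂ] K)) (πL : A →ₙₐ[ℂ] (L →L[ℂ] L)) (T : K →L[ℂ] L) : Prop :=
  ∀ (a : A) (x : K), T (πK a x) = πL a (T x)

/-- `H` is sub-tracing: for every closed `A`-invariant subspace `E` of `H` (a Hilbert
`A`-module under the restricted action), every Hilbert `A`-module `L`, and every nonzero
bounded `A`-module map `R : E → L`, there exists a bounded `A`-module map `V : H → E`
with `R ∘ V ≠ 0`. -/
def IsSubTracing {H : Type} [NormedAddCommGroup H] [InnerProductSpace ℂ H] [CompleteSpace H]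
    (πH : A →ₙₐ[ℂ] (H →L[ℂ] H)) : Prop :=
  ∀ (E : Submodule ℂ H), IsClosed (E : Set H) →
    ∀ (hinv : ∀ (a : A), ∀ x ∈ E, πH a x ∈ E),
    ∀ (L : Type) [NormedAddCommGroup L] [InnerProductSpace ℂ L] [CompleteSpace L],
    ∀ (πL : A →ₙₐ[ℂ] (L →L[ℂ] L)), IsHilbertRep A πL →
    ∀ R : ↥E →L[ℂ] L,
      (∀ (a : A) (x : ↥E), R ⟨πH a ↑x, hinv a ↑x x.2⟩ = πL a (R x)) → R ≠ 0 →
      ∃ V : H →L[ℂ] ↥E,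
        (∀ (a : A) (x : H), (↑(V (πH a x)) : H) = πH a ↑(V x)) ∧ R.comp V ≠ 0

/-- The algebra of upper triangular `2 × 2` complex matrices, normed as operators
on the Euclidean space `ℂ²` (the `L²` operator norm). -/
def T2 : Subalgebra ℂ (Matrix (Fin 2) (Fin 2) ℂ) where
  carrier := {M | M 1 0 = 0}
  mul_mem' := by
    intro a b ha hb
    simp only [Set.mem_setOf_eq] at *
    simp [Matrix.mul_apply, Fin.sum_univ_two, ha, hb]
  add_mem' := by
    intro a b ha hb
    simp only [Set.mem_setOf_eq] at *
    simp [ha, hb]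
  algebraMap_mem' := by
    intro c
    simp [Matrix.algebraMap_eq_diagonal]

/-- The operator `(ζ, η) ↦ (a • ζ + b • (T η), c • η)` on `H₁ × H₂`. -/
def blockOp {H₁ H₂ : Type} [NormedAddCommGroup H₁] [InnerProductSpace ℂ H₁]
    [NormedAddCommGroup H₂] [InnerProductSpace ℂ H₂]
    (T : H₂ →L[ℂ] H₁) (a b c : ℂ) : (H₁ × H₂) →L[ℂ] (H₁ × H₂) :=
  (a • ContinuousLinearMap.fst ℂ H₁ H₂ +
    b • T.comp (ContinuousLinearMap.snd ℂ H₁ H₂)).prod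
    (c • ContinuousLinearMap.snd ℂ H₁ H₂)

variable {H₁ H₂ : Type} [NormedAddCommGroup H₁] [InnerProductSpace ℂ H₁]
  [NormedAddCommGroup H₂] [InnerProductSpace ℂ H₂]

theorem blockOp_apply (T : H₂ →L[ℂ] H₁) (a b c : ℂ) (x : H₁ × H₂) :
    blockOp T a b c x = (a • x.1 + b • T x.2, c • x.2) := rfl

theorem blockOp_mul (T : H₂ →L[ℂ] H₁) (a b c a' b' c' : ℂ) :
    (blockOp T a b c).comp (blockOp T a' b' c') =
      blockOp T (a * a') (a * b' + b * c') (c * c') := by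
  refine ContinuousLinearMap.ext fun x => Prod.ext ?_ ?_
  · simp [blockOp_apply, smul_smul, smul_add, add_smul]
    abel
  · simp [blockOp_apply, smul_smul]

theorem blockOp_add (T : H₂ →L[ℂ] H₁) (a b c a' b' c' : ℂ) :
    blockOp T (a + a') (b + b') (c + c') = blockOp T a b c + blockOp T a' b' c' := by
  refine ContinuousLinearMap.ext fun x => Prod.ext ?_ ?_
  · simp [blockOp_apply, add_smul]
    abel
  · simp [blockOp_apply, add_smul]

theorem blockOp_smul (T : H₂ →L[ℂ] H₁) (s a b c : ℂ) :
    blockOp T (s * a) (s * b) (s * c) = s • blockOp T a b c := by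
  refine ContinuousLinearMap.ext fun x => Prod.ext ?_ ?_
  · simp [blockOp_apply, smul_smul, smul_add]
  · simp [blockOp_apply, smul_smul]

theorem blockOp_zero (T : H₂ →L[ℂ] H₁) : blockOp T 0 0 0 = 0 := by
  refine ContinuousLinearMap.ext fun x => Prod.ext ?_ ?_ <;> simp [blockOp_apply]

/-- Conjugation of an operator on `H₁ × H₂` to the `L²`-direct sum `WithLp 2 (H₁ × H₂)`. -/
def prodL2Conj (X : (H₁ × H₂) →L[ℂ] (H₁ × H₂)) :
    WithLp 2 (H₁ × H₂) →L[ℂ] WithLp 2 (H₁ × H₂) :=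
  ((WithLp.prodContinuousLinearEquiv 2 ℂ H₁ H₂).symm.toContinuousLinearMap.comp X).comp
    (WithLp.prodContinuousLinearEquiv 2 ℂ H₁ H₂).toContinuousLinearMap

theorem prodL2Conj_add (X Y : (H₁ × H₂) →L[ℂ] (H₁ × H₂)) :
    prodL2Conj (X + Y) = prodL2Conj X + prodL2Conj Y := by
  unfold prodL2Conj
  rw [ContinuousLinearMap.comp_add, ContinuousLinearMap.add_comp]

theorem prodL2Conj_smul (s : ℂ) (X : (H₁ × H₂) →L[ℂ] (H₁ × H₂)) :
    prodL2Conj (s • X) = s • prodL2Conj X := by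
  unfold prodL2Conj
  rw [ContinuousLinearMap.comp_smul, ContinuousLinearMap.smul_comp]

theorem prodL2Conj_zero : prodL2Conj (0 : (H₁ × H₂) →L[ℂ] (H₁ × H₂)) = 0 := by
  unfold prodL2Conj
  rw [ContinuousLinearMap.comp_zero, ContinuousLinearMap.zero_comp]

theorem prodL2Conj_mul (X Y : (H₁ × H₂) →L[ℂ] (H₁ × H₂)) :
    prodL2Conj X * prodL2Conj Y = prodL2Conj (X.comp Y) := by
  ext x <;> simp [prodL2Conj, ContinuousLinearMap.mul_apply]

/-- The representation `π_{(H₁,H₂,T)}` of `T2` on the Hilbert space direct sum `H₁ ⊕ H₂`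
determined by a contraction `T : H₂ → H₁`: the upper triangular matrix `[[a, b], [0, c]]`
acts by `(ζ, η) ↦ (a ζ + b (T η), c η)`. -/
def triRep (T : H₂ →L[ℂ] H₁) :
    ↥T2 →ₙₐ[ℂ] (WithLp 2 (H₁ × H₂) →L[ℂ] WithLp 2 (H₁ × H₂)) where
  toFun M := prodL2Conj (blockOp T ((M : Matrix (Fin 2) (Fin 2) ℂ) 0 0)
    ((M : Matrix (Fin 2) (Fin 2) ℂ) 0 1) ((M : Matrix (Fin 2) (Fin 2) ℂ) 1 1))
  map_add' M N := by
    have h : ((M + N : ↥T2) : Matrix (Fin 2) (Fin 2) ℂ)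
        = (M : Matrix (Fin 2) (Fin 2) ℂ) + (N : Matrix (Fin 2) (Fin 2) ℂ) := rfl
    simp only [h, Matrix.add_apply, blockOp_add, prodL2Conj_add]
  map_smul' s M := by
    have h : ((s • M : ↥T2) : Matrix (Fin 2) (Fin 2) ℂ)
        = s • (M : Matrix (Fin 2) (Fin 2) ℂ) := rfl
    simp only [h, Matrix.smul_apply, smul_eq_mul, blockOp_smul, prodL2Conj_smul,
      RingHom.id_apply, MonoidHom.id_apply]
  map_zero' := by
    have h : ((0 : ↥T2) : Matrix (Fin 2) (Fin 2) ℂ) = 0 := rfl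
    simp only [h, Matrix.zero_apply, blockOp_zero, prodL2Conj_zero]
  map_mul' M N := by
    have hM : (M : Matrix (Fin 2) (Fin 2) ℂ) 1 0 = 0 := M.2
    have hN : (N : Matrix (Fin 2) (Fin 2) ℂ) 1 0 = 0 := N.2
    have hMN : ((M * N : ↥T2) : Matrix (Fin 2) (Fin 2) ℂ)
        = (M : Matrix (Fin 2) (Fin 2) ℂ) * (N : Matrix (Fin 2) (Fin 2) ℂ) := rfl
    have e00 : ((M * N : ↥T2) : Matrix (Fin 2) (Fin 2) ℂ) 0 0
        = (M : Matrix (Fin 2) (Fin 2) ℂ) 0 0 * (N : Matrix (Fin 2) (Fin 2) ℂ) 0 0 := by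
      simp [hMN, Matrix.mul_apply, Fin.sum_univ_two, hN]
    have e01 : ((M * N : ↥T2) : Matrix (Fin 2) (Fin 2) ℂ) 0 1
        = (M : Matrix (Fin 2) (Fin 2) ℂ) 0 0 * (N : Matrix (Fin 2) (Fin 2) ℂ) 0 1
          + (M : Matrix (Fin 2) (Fin 2) ℂ) 0 1 * (N : Matrix (Fin 2) (Fin 2) ℂ) 1 1 := by
      simp [hMN, Matrix.mul_apply, Fin.sum_univ_two]
    have e11 : ((M * N : ↥T2) : Matrix (Fin 2) (Fin 2) ℂ) 1 1
        = (M : Matrix (Fin 2) (Fin 2) ℂ) 1 1 * (N : Matrix (Fin 2) (Fin 2) ℂ) 1 1 := by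
      simp [hMN, Matrix.mul_apply, Fin.sum_univ_two, hM]
    simp only [e00, e01, e11, ← blockOp_mul, ← prodL2Conj_mul]

/-! If `T` has dense range, take `E = H₁ ⊕ 0`, on which `T2` acts through the character
`a ↦ a₀₀`, and `R = id_E`. A module map `V : H₁ ⊕ H₂ → E` kills `π(a)(H₁ ⊕ H₂)` whenever
`a₀₀ = 0`; these ranges contain `0 ⊕ H₂` and `T(H₂) ⊕ 0`, so `V = 0` by density.

Conversely, a block-diagonal operator `V₁ ⊕ V₂` with `V₁ T = T V₂` is a module map. The diagonal
idempotents of `T2` split an invariant subspace `E` along `H₁ ⊕ H₂`, so a nonzero `R` is nonzero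
at some `(u, 0)` or `(0, v)` in `E`. In the first case take `V₁ = ⟪ξ, ·⟫ u` with `0 ≠ ξ ⊥ T(H₂)`
and `V₂ = 0`; in the second `V₁ = ⟪Tv, ·⟫ Tv` and `V₂ = ⟪T*Tv, ·⟫ v`, or `V₁ = 0` and
`V₂ = ⟪v, ·⟫ v` when `Tv = 0`. -/

open scoped ComplexInnerProductSpace
open ContinuousLinearMap InnerProductSpace WithLp

theorem Matrix.norm_entry_le_l2_opNorm {𝕜 m n : Type*} [RCLike 𝕜] [Fintype m] [Fintype n]
    [DecidableEq n] (A : Matrix m n 𝕜) (i : m) (j : n) : ‖A i j‖ ≤ ‖A‖ := by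
  have hcol := A.l2_opNorm_mulVec (EuclideanSpace.single j 1)
  simp only [PiLp.norm_single, norm_one, mul_one] at hcol
  refine le_trans (le_of_eq ?_) ((PiLp.norm_apply_le _ i).trans hcol)
  simp

@[ext]
theorem WithLp.prod_ext {p : ℝ≥0∞} {α β : Type*} {x y : WithLp p (α × β)} (h₁ : x.fst = y.fst)
    (h₂ : x.snd = y.snd) : x = y :=
  (WithLp.ext_iff p).2 (Prod.ext h₁ h₂)

theorem WithLp.toLp_fst_add_toLp_snd {p : ℝ≥0∞} {α β : Type*} [AddCommGroup α] [AddCommGroup β]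
    (x : WithLp p (α × β)) : toLp p (x.fst, 0) + toLp p (0, x.snd) = x := by
  ext <;> simp

theorem ContinuousLinearMap.exists_adjoint_apply_eq_zero_of_not_denseRange {𝕜 E F : Type*}
    [RCLike 𝕜] [NormedAddCommGroup E] [InnerProductSpace 𝕜 E] [CompleteSpace E]
    [NormedAddCommGroup F] [InnerProductSpace 𝕜 F] [CompleteSpace F] {T : E →L[𝕜] F} (hT : ¬DenseRange T) :
    ∃ ξ, ξ ≠ 0 ∧ adjoint T ξ = 0 := by
  by_contra! h
  refine hT (Submodule.dense_iff_topologicalClosure_eq_top.2 ?_ : Dense (T.range : Set F))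
  rw [Submodule.topologicalClosure_eq_top_iff, T.orthogonal_range, Submodule.eq_bot_iff]
  exact fun ξ hξ => by_contra fun hξ0 => h ξ hξ0 hξ

namespace T2

def mk (a b c : ℂ) : ↥T2 := ⟨!![a, b; 0, c], rfl⟩

def topLeft : ↥T2 →ₐ[ℂ] ℂ where
  toFun M := (M : Matrix (Fin 2) (Fin 2) ℂ) 0 0
  map_one' := rfl
  map_mul' M N := by
    have hN : (N : Matrix (Fin 2) (Fin 2) ℂ) 1 0 = 0 := N.2
    simp [Matrix.mul_apply, Fin.sum_univ_two, hN]
  map_zero' := rfl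
  map_add' _ _ := rfl
  commutes' _ := by simp [Matrix.algebraMap_eq_diagonal]

end T2

def topLeftRep (K : Type) [NormedAddCommGroup K] [InnerProductSpace ℂ K] :
    ↥T2 →ₙₐ[ℂ] (K →L[ℂ] K) :=
  ((Algebra.ofId ℂ (K →L[ℂ] K)).comp T2.topLeft).toNonUnitalAlgHom

theorem topLeftRep_apply (K : Type) [NormedAddCommGroup K] [InnerProductSpace ℂ K]
    (M : ↥T2) (x : K) : topLeftRep K M x = (M : Matrix (Fin 2) (Fin 2) ℂ) 0 0 • x :=
  rfl

theorem isHilbertRep_topLeftRep (K : Type) [NormedAddCommGroup K] [InnerProductSpace ℂ K]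
    [CompleteSpace K] : IsHilbertRep ↥T2 (topLeftRep K) := by
  refine ⟨fun M => ?_, ?_⟩
  · calc ‖topLeftRep K M‖ = ‖(M : Matrix (Fin 2) (Fin 2) ℂ) 0 0‖ * ‖(1 : K →L[ℂ] K)‖ :=
          norm_algebraMap (K →L[ℂ] K) (T2.topLeft M)
      _ ≤ ‖(M : Matrix (Fin 2) (Fin 2) ℂ) 0 0‖ :=
          mul_le_of_le_one_right (norm_nonneg _) norm_id_le
      _ ≤ ‖M‖ := Matrix.norm_entry_le_l2_opNorm _ 0 0
  · have hspan : {x : K | ∃ (a : ↥T2) (y : K), topLeftRep K a y = x} = Set.univ :=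
      Set.eq_univ_of_forall fun y => ⟨1, y, one_smul ℂ y⟩
    rw [hspan, Submodule.span_univ, Submodule.top_coe]
    exact dense_univ

theorem triRep_apply (T : H₂ →L[ℂ] H₁) (M : ↥T2) (x : WithLp 2 (H₁ × H₂)) :
    triRep T M x = toLp 2 ((M : Matrix (Fin 2) (Fin 2) ℂ) 0 0 • x.fst
      + (M : Matrix (Fin 2) (Fin 2) ℂ) 0 1 • T x.snd, (M : Matrix (Fin 2) (Fin 2) ℂ) 1 1 • x.snd) :=
  rfl

theorem triRep_mk_apply (T : H₂ →L[ℂ] H₁) (a b c : ℂ) (x : WithLp 2 (H₁ × H₂)) :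
    triRep T (T2.mk a b c) x = toLp 2 (a • x.fst + b • T x.snd, c • x.snd) :=
  rfl

theorem triRep_apply_of_snd_eq_zero (T : H₂ →L[ℂ] H₁) (M : ↥T2) {x : WithLp 2 (H₁ × H₂)}
    (hx : x.snd = 0) : triRep T M x = (M : Matrix (Fin 2) (Fin 2) ℂ) 0 0 • x := by
  ext <;> simp [triRep_apply, hx]

theorem eq_zero_of_intertwines_triRep_of_snd_eq_zero {T : H₂ →L[ℂ] H₁} (hT : DenseRange T)
    {V : WithLp 2 (H₁ × H₂) →L[ℂ] WithLp 2 (H₁ × H₂)} (hVsnd : ∀ x, (V x).snd = 0)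
    (hV : ∀ (a : ↥T2) x, V (triRep T a x) = triRep T a (V x)) : V = 0 := by
  have hkill : ∀ (a : ↥T2) x, (a : Matrix (Fin 2) (Fin 2) ℂ) 0 0 = 0 → V (triRep T a x) = 0 := by
    intro a x ha
    rw [hV, triRep_apply_of_snd_eq_zero T a (hVsnd x), ha, zero_smul]
  have hsnd : ∀ η : H₂, V (toLp 2 (0, η)) = 0 := fun η => by
    simpa [triRep_mk_apply] using hkill (T2.mk 0 0 1) (toLp 2 (0, η)) rfl
  have hrange : ∀ η : H₂, V (toLp 2 (T η, 0)) = 0 := fun η => by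
    simpa [triRep_mk_apply] using hkill (T2.mk 0 1 0) (toLp 2 (0, η)) rfl
  have hfst : (fun ζ : H₁ => V (toLp 2 (ζ, 0))) = 0 :=
    hT.equalizer (by fun_prop) continuous_const (funext hrange)
  ext1 x
  rw [← WithLp.toLp_fst_add_toLp_snd x, map_add, congrFun hfst, hsnd]
  simp

theorem not_isSubTracing_triRep_of_denseRange [CompleteSpace H₁] [CompleteSpace H₂]
    [Nontrivial H₁] {T : H₂ →L[ℂ] H₁} (hT : DenseRange T) : ¬IsSubTracing ↥T2 (triRep T) := by
  intro hsub
  set E : Submodule ℂ (WithLp 2 (H₁ × H₂)) :=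
    (WithLp.sndL 2 ℂ H₁ H₂ : WithLp 2 (H₁ × H₂) →ₗ[ℂ] H₂).ker
  have hinv : ∀ a, ∀ x ∈ E, triRep T a x ∈ E := fun a x hx => by
    simp_all [E, triRep_apply]
  have : CompleteSpace E := (isClosed_ker _).completeSpace_coe
  have hmod : ∀ (a : ↥T2) (x : E), (⟨triRep T a x, hinv a x x.2⟩ : E) = topLeftRep E a x :=
    fun a x => by
      rw [topLeftRep_apply]
      exact Subtype.ext (triRep_apply_of_snd_eq_zero T a x.2)
  obtain ⟨ζ, hζ⟩ := exists_ne (0 : H₁)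
  have : Nontrivial E :=
    nontrivial_of_ne ⟨toLp 2 (ζ, 0), rfl⟩ 0 fun h => hζ (congrArg (fun x : E => x.1.fst) h)
  obtain ⟨V, hV, hV0⟩ := hsub E (isClosed_ker _) hinv E (topLeftRep E)
    (isHilbertRep_topLeftRep E) 1 hmod one_ne_zero
  have hV' := eq_zero_of_intertwines_triRep_of_snd_eq_zero hT (V := E.subtypeL ∘L V)
    (fun x => (V x).2) hV
  exact hV0 (ContinuousLinearMap.ext fun x => Subtype.ext (DFunLike.congr_fun hV' x))

def diagOp (V₁ : H₁ →L[ℂ] H₁) (V₂ : H₂ →L[ℂ] H₂) :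
    WithLp 2 (H₁ × H₂) →L[ℂ] WithLp 2 (H₁ × H₂) :=
  prodL2Conj (V₁.prodMap V₂)

theorem diagOp_apply (V₁ : H₁ →L[ℂ] H₁) (V₂ : H₂ →L[ℂ] H₂) (x : WithLp 2 (H₁ × H₂)) :
    diagOp V₁ V₂ x = toLp 2 (V₁ x.fst, V₂ x.snd) :=
  rfl

theorem diagOp_triRep {T : H₂ →L[ℂ] H₁} {V₁ : H₁ →L[ℂ] H₁} {V₂ : H₂ →L[ℂ] H₂}
    (h : V₁ ∘L T = T ∘L V₂) (a : ↥T2) (x : WithLp 2 (H₁ × H₂)) :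
    diagOp V₁ V₂ (triRep T a x) = triRep T a (diagOp V₁ V₂ x) := by
  have h' : ∀ y, V₁ (T y) = T (V₂ y) := fun y => congrArg (· y) h
  ext <;> simp [diagOp_apply, triRep_apply, h']

theorem diagOp_rankOne_apply (u ζ : H₁) (v η : H₂) (x : WithLp 2 (H₁ × H₂)) :
    diagOp (rankOne ℂ u ζ) (rankOne ℂ v η) x =
      ⟪ζ, x.fst⟫ • toLp 2 (u, 0) + ⟪η, x.snd⟫ • toLp 2 (0, v) := by
  ext <;> simp [diagOp_apply]

section InvariantSubspace

variable {T : H₂ →L[ℂ] H₁} {E : Submodule ℂ (WithLp 2 (H₁ × H₂))}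

theorem exists_intertwiner_of_diagOp_rankOne {L : Type*} [NormedAddCommGroup L]
    [NormedSpace ℂ L] (R : E →L[ℂ] L) {u ζ : H₁} {v η : H₂}
    (hcomm : rankOne ℂ u ζ ∘L T = T ∘L rankOne ℂ v η)
    (hu : toLp 2 (u, 0) ∈ E) (hv : toLp 2 (0, v) ∈ E)
    (hR : ζ ≠ 0 ∧ R ⟨_, hu⟩ ≠ 0 ∨ η ≠ 0 ∧ R ⟨_, hv⟩ ≠ 0) :
    ∃ V : WithLp 2 (H₁ × H₂) →L[ℂ] E,
      (∀ (a : ↥T2) x, (V (triRep T a x) : WithLp 2 (H₁ × H₂)) = triRep T a (V x)) ∧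
        R ∘L V ≠ 0 := by
  have hmem : ∀ x, diagOp (rankOne ℂ u ζ) (rankOne ℂ v η) x ∈ E := fun x => by
    rw [diagOp_rankOne_apply]
    exact E.add_mem (E.smul_mem _ hu) (E.smul_mem _ hv)
  refine ⟨(diagOp _ _).codRestrict E hmem, diagOp_triRep hcomm, fun hV => ?_⟩
  rcases hR with ⟨hζ, hRu⟩ | ⟨hη, hRv⟩
  · have hVζ : (diagOp _ _).codRestrict E hmem (toLp 2 (ζ, 0)) = ⟪ζ, ζ⟫ • ⟨_, hu⟩ :=
      Subtype.ext (by simp [diagOp_rankOne_apply])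
    have h := DFunLike.congr_fun hV (toLp 2 (ζ, 0))
    rw [comp_apply, hVζ, map_smul, zero_apply, smul_eq_zero, inner_self_eq_zero] at h
    exact h.elim hζ hRu
  · have hVη : (diagOp _ _).codRestrict E hmem (toLp 2 (0, η)) = ⟪η, η⟫ • ⟨_, hv⟩ :=
      Subtype.ext (by simp [diagOp_rankOne_apply])
    have h := DFunLike.congr_fun hV (toLp 2 (0, η))
    rw [comp_apply, hVη, map_smul, zero_apply, smul_eq_zero, inner_self_eq_zero] at h
    exact h.elim hη hRv

theorem toLp_fst_mem_of_triRep_invariant (hinv : ∀ (a : ↥T2), ∀ x ∈ E, triRep T a x ∈ E)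
    {x : WithLp 2 (H₁ × H₂)} (hx : x ∈ E) : toLp 2 (x.fst, 0) ∈ E := by
  simpa [triRep_mk_apply] using hinv (T2.mk 1 0 0) x hx

theorem toLp_snd_mem_of_triRep_invariant (hinv : ∀ (a : ↥T2), ∀ x ∈ E, triRep T a x ∈ E)
    {x : WithLp 2 (H₁ × H₂)} (hx : x ∈ E) : toLp 2 (0, x.snd) ∈ E := by
  simpa [triRep_mk_apply] using hinv (T2.mk 0 0 1) x hx

theorem toLp_apply_mem_of_triRep_invariant (hinv : ∀ (a : ↥T2), ∀ x ∈ E, triRep T a x ∈ E)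
    {v : H₂} (hv : toLp 2 (0, v) ∈ E) : toLp 2 (T v, 0) ∈ E := by
  simpa [triRep_mk_apply] using hinv (T2.mk 0 1 0) _ hv

theorem exists_summand_apply_ne_zero (hinv : ∀ (a : ↥T2), ∀ x ∈ E, triRep T a x ∈ E)
    {L : Type*} [AddCommMonoid L] [Module ℂ L] [TopologicalSpace L] {R : E →L[ℂ] L}
    (hR : R ≠ 0) :
    (∃ (u : H₁) (hu : toLp 2 (u, 0) ∈ E), R ⟨_, hu⟩ ≠ 0) ∨
      ∃ (v : H₂) (hv : toLp 2 (0, v) ∈ E), R ⟨_, hv⟩ ≠ 0 := by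
  by_contra! h
  refine hR (ContinuousLinearMap.ext fun x => ?_)
  have hsplit : x = ⟨_, toLp_fst_mem_of_triRep_invariant hinv x.2⟩ +
      ⟨_, toLp_snd_mem_of_triRep_invariant hinv x.2⟩ :=
    Subtype.ext (WithLp.toLp_fst_add_toLp_snd x.1).symm
  rw [hsplit, map_add, h.1, h.2, add_zero, zero_apply]

end InvariantSubspace

theorem isSubTracing_triRep_of_not_denseRange [CompleteSpace H₁] [CompleteSpace H₂]
    {T : H₂ →L[ℂ] H₁} (hT : ¬DenseRange T) : IsSubTracing ↥T2 (triRep T) := by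
  obtain ⟨ξ, hξ, hTξ⟩ := exists_adjoint_apply_eq_zero_of_not_denseRange hT
  intro E _ hinv L _ _ _ _ _ R _ hR
  have hzero : toLp 2 ((0 : H₁), (0 : H₂)) ∈ E := by
    rw [Prod.mk_zero_zero, toLp_zero]
    exact E.zero_mem
  rcases exists_summand_apply_ne_zero hinv hR with ⟨u, hu, hRu⟩ | ⟨v, hv, hRv⟩
  · exact exists_intertwiner_of_diagOp_rankOne R (v := 0) (η := 0)
      (by simp [InnerProductSpace.rankOne_comp, hTξ]) hu hzero (.inl ⟨hξ, hRu⟩)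
  have hv0 : v ≠ 0 := by
    rintro rfl
    exact hRv (by rw [show (⟨_, hv⟩ : E) = 0 from Subtype.ext (by ext <;> rfl), map_zero])
  by_cases hTv : T v = 0
  · exact exists_intertwiner_of_diagOp_rankOne R (u := 0) (ζ := 0)
      (by simp [comp_rankOne, hTv]) hzero hv (.inr ⟨hv0, hRv⟩)
  have hTTv : adjoint T (T v) ≠ 0 := fun h => by
    have hker : v ∈ (adjoint T ∘L T).ker := h
    rw [ker_adjoint_comp_self] at hker
    exact hTv hker
  exact exists_intertwiner_of_diagOp_rankOne R (ζ := T v) (η := adjoint T (T v))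
    (by rw [InnerProductSpace.rankOne_comp, comp_rankOne])
    (toLp_apply_mem_of_triRep_invariant hinv hv) hv (.inr ⟨hTTv, hRv⟩)

theorem triRep_subtracing_iff_general [CompleteSpace H₁] [CompleteSpace H₂]
    [Nontrivial H₁]
    (T : H₂ →L[ℂ] H₁) :
    IsSubTracing ↥T2 (triRep T) ↔ ¬Dense (Set.range ⇑T : Set H₁) :=
  ⟨fun hsub hT => not_isSubTracing_triRep_of_denseRange hT hsub,
    isSubTracing_triRep_of_not_denseRange⟩

/-- The Hilbert `T2`-module `H₁ ⊕ H₂` given by `π_(H₁,H₂,T)` is sub-tracing if and only if the range of `T` is not dense in `H₁`. -/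
theorem triRep_subtracing_iff [CompleteSpace H₁] [CompleteSpace H₂]
    [Nontrivial H₁] [Nontrivial H₂]
    (T : H₂ →L[ℂ] H₁) (hT : ‖T‖ ≤ 1) :
    IsSubTracing ↥T2 (triRep T) ↔ ¬Dense (Set.range ⇑T : Set H₁) :=
  triRep_subtracing_iff_general T
end
end

section
/- Let H₁, H₂ be nonzero complex Hilbert spaces and let W be a linear subspace of B(H₂, H₁). Let S ⊆ B(H₁ × H₂) be the set of all operators x_{a,c,R} : (ζ, η) ↦ (aζ + Rη, cη) for a, c ∈ ℂ and R ∈ W (a subalgebra of B(H₁ × H₂)). Then the commutant S' equals the set of block-diagonal operators (ζ, η) ↦ (Aζ, Dη), where A ∈ B(H₁) and D ∈ B(H₂) satisfy A R = R D for all R ∈ W. -/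
/-!
An operator commuting with the idempotent `(ζ, η) ↦ (ζ, 0)` (the case `a = 1`, `c = 0`, `R = 0`)
is block diagonal, `A ⊕ D`; and `A ⊕ D` commutes with `(ζ, η) ↦ (a ζ + R η, c η)` exactly when
`A R = R D`, as is seen by comparing first components at `(0, η)`.
-/

namespace ContinuousLinearMap

variable {𝕜 M₁ M₂ : Type*} [CommSemiring 𝕜]
  [TopologicalSpace M₁] [AddCommMonoid M₁] [Module 𝕜 M₁]
  [TopologicalSpace M₂] [AddCommMonoid M₂] [Module 𝕜 M₂]

theorem eq_prodMap_of_commute_inl_comp_fst (y : (M₁ × M₂) →L[𝕜] (M₁ × M₂))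
    (h : Commute y ((inl 𝕜 M₁ M₂).comp (fst 𝕜 M₁ M₂))) :
    y = ((fst 𝕜 M₁ M₂).comp (y.comp (inl 𝕜 M₁ M₂))).prodMap
      ((snd 𝕜 M₁ M₂).comp (y.comp (inr 𝕜 M₁ M₂))) := by
  have hfst : ∀ v : M₁ × M₂, y (v.1, 0) = ((y v).1, 0) := fun v =>
    DFunLike.congr_fun h v
  refine ext fun ⟨ζ, η⟩ => Prod.ext ?_ ?_
  · simp [hfst (ζ, η)]
  · have hsplit : y (ζ, η) = y (ζ, 0) + y (0, η) := by
      rw [← map_add, Prod.mk_add_mk, add_zero, zero_add]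
    have h0 : (y (ζ, 0)).2 = 0 := by rw [hfst (ζ, η)]
    simp [hsplit, h0]

variable [ContinuousAdd M₁] [ContinuousConstSMul 𝕜 M₁] [ContinuousConstSMul 𝕜 M₂]

def upperTriangular (a c : 𝕜) (R : M₂ →L[𝕜] M₁) : (M₁ × M₂) →L[𝕜] (M₁ × M₂) :=
  (a • fst 𝕜 M₁ M₂ + R.comp (snd 𝕜 M₁ M₂)).prod (c • snd 𝕜 M₁ M₂)

@[simp]
theorem upperTriangular_apply (a c : 𝕜) (R : M₂ →L[𝕜] M₁) (v : M₁ × M₂) :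
    upperTriangular a c R v = (a • v.1 + R v.2, c • v.2) := rfl

theorem upperTriangular_one_zero_zero :
    upperTriangular (1 : 𝕜) 0 (0 : M₂ →L[𝕜] M₁) = (inl 𝕜 M₁ M₂).comp (fst 𝕜 M₁ M₂) := by
  ext <;> simp

theorem commute_prodMap_upperTriangular_iff (A : M₁ →L[𝕜] M₁) (D : M₂ →L[𝕜] M₂)
    (a c : 𝕜) (R : M₂ →L[𝕜] M₁) :
    Commute (A.prodMap D) (upperTriangular a c R) ↔ A.comp R = R.comp D := by
  constructor
  · intro h
    ext η
    simpa using congr_arg Prod.fst (DFunLike.congr_fun h (0, η))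
  · intro h
    refine ext fun v => Prod.ext ?_ (by simp [map_smul])
    simp [map_smul, ← comp_apply, h]

end ContinuousLinearMap

theorem commutant_of_upper_triangular_general
    (H₁ : Type) [NormedAddCommGroup H₁] [InnerProductSpace ℂ H₁] (H₂ : Type) [NormedAddCommGroup H₂] [InnerProductSpace ℂ H₂]
    (W : Submodule ℂ (H₂ →L[ℂ] H₁)) :
    Set.centralizer
      {x : (H₁ × H₂) →L[ℂ] (H₁ × H₂) | ∃ (a c : ℂ) (R : H₂ →L[ℂ] H₁), R ∈ W ∧
        x = ((a • ContinuousLinearMap.fst ℂ H₁ H₂ +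
              R.comp (ContinuousLinearMap.snd ℂ H₁ H₂)).prod
             (c • ContinuousLinearMap.snd ℂ H₁ H₂))}
    = {y : (H₁ × H₂) →L[ℂ] (H₁ × H₂) | ∃ (A : H₁ →L[ℂ] H₁) (D : H₂ →L[ℂ] H₂),
        (∀ R ∈ W, A.comp R = R.comp D) ∧ y = A.prodMap D} := by
  ext y
  rw [Set.mem_centralizer_iff]
  constructor
  · intro hy
    have hP : Commute y ((ContinuousLinearMap.inl ℂ H₁ H₂).comp (ContinuousLinearMap.fst ℂ H₁ H₂)) := by
      rw [← ContinuousLinearMap.upperTriangular_one_zero_zero]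
      exact (hy _ ⟨1, 0, 0, W.zero_mem, rfl⟩).symm
    have hy_diag := y.eq_prodMap_of_commute_inl_comp_fst hP
    refine ⟨_, _, fun R hR => ?_, hy_diag⟩
    rw [← ContinuousLinearMap.commute_prodMap_upperTriangular_iff _ _ 0 0, ← hy_diag]
    exact (hy _ ⟨0, 0, R, hR, rfl⟩).symm
  · rintro ⟨A, D, hAD, rfl⟩ _ ⟨a, c, R, hR, rfl⟩
    exact ((ContinuousLinearMap.commute_prodMap_upperTriangular_iff A D a c R).mpr (hAD R hR)).symm

/-- The commutant of the algebra of operators `(ζ, η) ↦ (a ζ + R η, c η)` on `H₁ ⊕ H₂`,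
for `a, c ∈ ℂ` and `R` in a linear subspace `W ⊆ B(H₂, H₁)`, consists exactly of the
block diagonal operators `A ⊕ D` with `A R = R D` for all `R ∈ W`. -/
theorem commutant_of_upper_triangular
    (H₁ : Type) [NormedAddCommGroup H₁] [InnerProductSpace ℂ H₁] [CompleteSpace H₁] (H₂ : Type) [NormedAddCommGroup H₂] [InnerProductSpace ℂ H₂] [CompleteSpace H₂]
    [Nontrivial H₁] [Nontrivial H₂]
    (W : Submodule ℂ (H₂ →L[ℂ] H₁)) :
    Set.centralizer
      {x : (H₁ × H₂) →L[ℂ] (H₁ × H₂) | ∃ (a c : ℂ) (R : H₂ →L[ℂ] H₁), R ∈ W ∧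
        x = ((a • ContinuousLinearMap.fst ℂ H₁ H₂ +
              R.comp (ContinuousLinearMap.snd ℂ H₁ H₂)).prod
             (c • ContinuousLinearMap.snd ℂ H₁ H₂))}
    = {y : (H₁ × H₂) →L[ℂ] (H₁ × H₂) | ∃ (A : H₁ →L[ℂ] H₁) (D : H₂ →L[ℂ] H₂),
        (∀ R ∈ W, A.comp R = R.comp D) ∧ y = A.prodMap D} :=
  commutant_of_upper_triangular_general H₁ H₂ W
end
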